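/- Let d ≥ 1, let x₀ ∈ ℝ^d, μ > 0, let u ∈ ℝ^d be a unit vector (‖u‖₂ = 1), let b ∈ ℝ, and define f(x) := (⟨u, x⟩ + b)/(2μ). Then for every interval I ⊆ ℝ of length η ≥ 0, Vol({x ∈ B₂(x₀, μ) : f(x) ∈ I}) / Vol(B₂(x₀, μ)) ≤ 2η · V_{d−1}/V_d. -/

import Mathlib

open scoped RealInnerProductSpace

/-- `V_d = π^{d/2} / Γ(d/2 + 1)`, the Lebesgue volume of the `d`-dimensional
Euclidean unit ball (with `V_0 = 1`). -/
noncomputable def unitBallVol (d : ℕ) : ℝ :=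
  Real.pi ^ ((d : ℝ) / 2) / Real.Gamma ((d : ℝ) / 2 + 1)

/-!
Split `ℝ^d` isometrically as `ℝ × u⊥` via `x ↦ (⟪u, x⟫, proj_{u⊥} x)`; this map preserves volume.
Since the projection is `1`-Lipschitz, the part of `B(x₀, μ)` where `⟪u, x⟫` lies in an interval
of length `ℓ` is carried into the cylinder `[s, s + ℓ] × B_{u⊥}(proj x₀, μ)`, of volume
`ℓ μ^{d-1} V_{d-1}`. Dividing by `μ^d V_d` and noting that `f x ∈ I` confines `⟪u, x⟫` to an
interval of length `2μη` gives the bound.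
-/

open MeasureTheory Metric Module

lemma unitBallVol_pos (n : ℕ) : 0 < unitBallVol n :=
  div_pos (Real.rpow_pos_of_pos Real.pi_pos _) (Real.Gamma_pos_of_pos (by positivity))

lemma sqrt_pi_pow_div_Gamma_eq_unitBallVol (n : ℕ) :
    √Real.pi ^ n / Real.Gamma (n / 2 + 1) = unitBallVol n := by
  rw [unitBallVol, Real.sqrt_eq_rpow, ← Real.rpow_mul_natCast Real.pi_nonneg]
  ring_nf

section

variable {E : Type*} [NormedAddCommGroup E] [InnerProductSpace ℝ E]

theorem volume_ball_eq_unitBallVol [FiniteDimensional ℝ E] [MeasurableSpace E] [BorelSpace E]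
    (x : E) {r : ℝ} (hr : 0 < r) :
    volume (ball x r) = ENNReal.ofReal (r ^ finrank ℝ E * unitBallVol (finrank ℝ E)) := by
  rcases subsingleton_or_nontrivial E with _ | _
  · have hball : ball x r = parallelepiped (stdOrthonormalBasis ℝ E) := by
      ext y
      simpa [Subsingleton.elim y x, hr, mem_parallelepiped_iff]
        using ⟨0, ⟨le_rfl, zero_le_one⟩, Subsingleton.elim _ _⟩
    simp [hball, OrthonormalBasis.volume_parallelepiped, finrank_zero_of_subsingleton, unitBallVol]
  · rw [InnerProductSpace.volume_ball, ENNReal.ofReal_mul (by positivity),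
      ENNReal.ofReal_pow hr.le, sqrt_pi_pow_div_Gamma_eq_unitBallVol]

noncomputable def orthogonalDecompositionSpanUnit (u : E) (hu : ‖u‖ = 1) :
    E ≃ₗᵢ[ℝ] WithLp 2 (ℝ × (ℝ ∙ u)ᗮ) :=
  (ℝ ∙ u).orthogonalDecomposition.trans
    (LinearIsometryEquiv.withLpProdCongr 2 (LinearIsometryEquiv.toSpanUnitSingleton u hu).symm
      (LinearIsometryEquiv.refl ℝ _))

theorem orthogonalDecompositionSpanUnit_apply (u : E) (hu : ‖u‖ = 1) (x : E) :
    orthogonalDecompositionSpanUnit u hu x =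
      WithLp.toLp 2 (⟪u, x⟫, (ℝ ∙ u)ᗮ.orthogonalProjectionOnto x) := by
  suffices (LinearIsometryEquiv.toSpanUnitSingleton u hu).symm
      ((ℝ ∙ u).orthogonalProjectionOnto x) = ⟪u, x⟫ by
    simp [orthogonalDecompositionSpanUnit, this]
  rw [LinearIsometryEquiv.symm_apply_eq]
  ext
  simp [← Submodule.starProjection_unit_singleton ℝ hu]

theorem finrank_orthogonal_span_unit [FiniteDimensional ℝ E] {u : E} (hu : ‖u‖ = 1) :
    finrank ℝ (ℝ ∙ u)ᗮ = finrank ℝ E - 1 := by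
  have := (ℝ ∙ u).finrank_add_finrank_orthogonal
  rw [finrank_span_singleton (norm_ne_zero_iff.mp (hu ▸ one_ne_zero))] at this
  omega

theorem volume_ball_inter_slab_le [FiniteDimensional ℝ E] [MeasurableSpace E] [BorelSpace E]
    {u : E} (hu : ‖u‖ = 1) (x₀ : E) {r : ℝ} (hr : 0 < r) (J : Set ℝ) :
    volume {x ∈ ball x₀ r | ⟪u, x⟫ ∈ J} ≤
      volume J * ENNReal.ofReal (r ^ (finrank ℝ E - 1) * unitBallVol (finrank ℝ E - 1)) := by
  set P := (ℝ ∙ u)ᗮ.orthogonalProjectionOnto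
  have hΦ : MeasurePreserving (WithLp.ofLp ∘ orthogonalDecompositionSpanUnit u hu) :=
    (WithLp.volume_preserving_ofLp ℝ _).comp (LinearIsometryEquiv.measurePreserving _)
  have hsub : {x ∈ ball x₀ r | ⟪u, x⟫ ∈ J} ⊆
      WithLp.ofLp ∘ orthogonalDecompositionSpanUnit u hu ⁻¹' J ×ˢ ball (P x₀) r := by
    rintro x ⟨hx, hxJ⟩
    simp only [Set.mem_preimage, Function.comp_apply, orthogonalDecompositionSpanUnit_apply,
      Set.mem_prod, mem_ball]
    refine ⟨hxJ, ?_⟩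
    calc dist (P x) (P x₀) = ‖P (x - x₀)‖ := by rw [dist_eq_norm, map_sub]
      _ ≤ ‖x - x₀‖ := Submodule.norm_orthogonalProjectionOnto_apply_le _ _
      _ < r := by rwa [← dist_eq_norm]
  calc volume {x ∈ ball x₀ r | ⟪u, x⟫ ∈ J}
      ≤ volume (J ×ˢ ball (P x₀) r) := (measure_mono hsub).trans (hΦ.measure_preimage_le _)
    _ ≤ volume J * volume (ball (P x₀) r) := Measure.prod_prod_le _ _
    _ = _ := by rw [volume_ball_eq_unitBallVol _ hr, finrank_orthogonal_span_unit hu]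

theorem volume_ball_inter_slab_div_volume_ball_le [FiniteDimensional ℝ E] [MeasurableSpace E]
    [BorelSpace E] {u : E} (hu : ‖u‖ = 1) (x₀ : E) {r : ℝ} (hr : 0 < r) (s ℓ : ℝ) :
    volume {x ∈ ball x₀ r | ⟪u, x⟫ ∈ Set.Icc s (s + ℓ)} / volume (ball x₀ r) ≤
      ENNReal.ofReal (ℓ / r * (unitBallVol (finrank ℝ E - 1) / unitBallVol (finrank ℝ E))) := by
  have : Nontrivial E := nontrivial_of_ne u 0 (norm_ne_zero_iff.mp (hu ▸ one_ne_zero))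
  obtain ⟨n, hn⟩ := Nat.exists_eq_add_of_le' (finrank_pos (R := ℝ) (M := E))
  have hslab := volume_ball_inter_slab_le hu x₀ hr (Set.Icc s (s + ℓ))
  rw [Real.volume_Icc, add_sub_cancel_left, hn, Nat.add_sub_cancel] at hslab
  have hVn := unitBallVol_pos n
  have hVn1 := unitBallVol_pos (n + 1)
  calc volume {x ∈ ball x₀ r | ⟪u, x⟫ ∈ Set.Icc s (s + ℓ)} / volume (ball x₀ r)
      ≤ ENNReal.ofReal ℓ * ENNReal.ofReal (r ^ n * unitBallVol n) /
          ENNReal.ofReal (r ^ (n + 1) * unitBallVol (n + 1)) := by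
        rw [volume_ball_eq_unitBallVol x₀ hr, hn]
        exact ENNReal.div_le_div_right hslab _
    _ = ENNReal.ofReal (ℓ * (r ^ n * unitBallVol n) / (r ^ (n + 1) * unitBallVol (n + 1))) := by
        rw [← ENNReal.ofReal_mul' (by positivity), ENNReal.ofReal_div_of_pos (by positivity)]
    _ = ENNReal.ofReal (ℓ / r * (unitBallVol (finrank ℝ E - 1) / unitBallVol (finrank ℝ E))) := by
        rw [hn, Nat.add_sub_cancel, pow_succ]
        field_simp

end

theorem volume_fraction_slab_le_general
    (d : ℕ) (x₀ : EuclideanSpace ℝ (Fin d)) (μ : ℝ) (hμ : 0 < μ)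
    (u : EuclideanSpace ℝ (Fin d)) (hu : ‖u‖ = 1) (b : ℝ)
    (η : ℝ) (I : Set ℝ) (hI : ∃ a : ℝ, I ⊆ Set.Icc a (a + η)) :
    MeasureTheory.volume {x ∈ Metric.ball x₀ μ | (⟪u, x⟫ + b) / (2 * μ) ∈ I} /
        MeasureTheory.volume (Metric.ball x₀ μ) ≤
      ENNReal.ofReal (2 * η * (unitBallVol (d - 1) / unitBallVol d)) := by
  obtain ⟨a, haI⟩ := hI
  have h2μ : 0 < 2 * μ := by positivity
  have hslab : {x ∈ ball x₀ μ | (⟪u, x⟫ + b) / (2 * μ) ∈ I} ⊆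
      {x ∈ ball x₀ μ | ⟪u, x⟫ ∈ Set.Icc (2 * μ * a - b) (2 * μ * a - b + 2 * μ * η)} := by
    rintro x ⟨hx, hxI⟩
    obtain ⟨hlo, hhi⟩ := haI hxI
    rw [le_div_iff₀ h2μ] at hlo
    rw [div_le_iff₀ h2μ] at hhi
    exact ⟨hx, by linarith, by linarith⟩
  calc volume {x ∈ ball x₀ μ | (⟪u, x⟫ + b) / (2 * μ) ∈ I} / volume (ball x₀ μ)
      ≤ volume {x ∈ ball x₀ μ | ⟪u, x⟫ ∈ Set.Icc (2 * μ * a - b) (2 * μ * a - b + 2 * μ * η)} /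
          volume (ball x₀ μ) := ENNReal.div_le_div_right (measure_mono hslab) _
    _ ≤ ENNReal.ofReal (2 * μ * η / μ * (unitBallVol (d - 1) / unitBallVol d)) := by
        simpa only [finrank_euclideanSpace_fin]
          using volume_ball_inter_slab_div_volume_ball_le hu x₀ hμ _ _
    _ = ENNReal.ofReal (2 * η * (unitBallVol (d - 1) / unitBallVol d)) := by
        rw [mul_div_right_comm, mul_div_cancel_right₀ _ hμ.ne']

/-- For a unit vector `u ∈ ℝ^d`, `b ∈ ℝ`, `μ > 0`, and
`f(x) = (⟨u, x⟩ + b)/(2μ)`, the fraction of the ball `B₂(x₀, μ)` mapped by `f` into any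
interval `I` of length `η` is at most `2η · V_{d-1}/V_d`. -/
theorem volume_fraction_slab_le
    (d : ℕ) (hd : 1 ≤ d) (x₀ : EuclideanSpace ℝ (Fin d)) (μ : ℝ) (hμ : 0 < μ)
    (u : EuclideanSpace ℝ (Fin d)) (hu : ‖u‖ = 1) (b : ℝ)
    (η : ℝ) (hη : 0 ≤ η) (I : Set ℝ) (hI : ∃ a : ℝ, I ⊆ Set.Icc a (a + η)) :
    MeasureTheory.volume {x ∈ Metric.ball x₀ μ | (⟪u, x⟫ + b) / (2 * μ) ∈ I} /
        MeasureTheory.volume (Metric.ball x₀ μ) ≤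
      ENNReal.ofReal (2 * η * (unitBallVol (d - 1) / unitBallVol d)) :=
  volume_fraction_slab_le_general d x₀ μ hμ u hu b η I hI
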